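/- Let f : ℝ^n → ℝ be continuous and strongly convex with constant α > 0 with respect to ‖·‖₂, let g₁, …, g_p : ℝ^n → ℝ be continuous and convex, let A be a q×n real matrix and b ∈ ℝ^q. For every (λ, μ) ∈ ℝ^q × ℝ₊^p the function x ↦ f(x) + λᵀ(Ax − b) + μᵀ g(x) (where g = (g₁, …, g_p)) attains a unique minimizer x(λ, μ) over ℝ^n, and the map (λ, μ) ↦ x(λ, μ) is continuous on ℝ^q × ℝ₊^p. -/

import Mathlib

/-!
Strong convexity gives quadratic growth `h z + m / 4 * dist x z ^ 2 ≤ h x` away from a minimizer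
`z`, and convexity propagates "`h` is smaller at the centre than on a sphere" to the whole exterior
of that sphere. Hence a continuous strongly convex function on a proper space attains its minimum
in a large ball (uniquely, by strict convexity), and any convex function that is
`m * ε ^ 2 / 8`-close to it on the ball of radius `ε` around `z` has its minimizers in that ball.
For `μ ≥ 0` the Lagrangian is `α`-strongly convex and it is jointly continuous in `(λ, μ, x)`, so
by the tube lemma nearby multipliers give uniformly close Lagrangians on that compact ball.
-/
open scoped RealInnerProductSpace Matrix
noncomputable section

/-- `ℝ^k` with the Euclidean norm. -/
abbrev E (k : ℕ) := EuclideanSpace ℝ (Fin k)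

/-- The Lagrangian `x ↦ f(x) + λᵀ(Ax − b) + μᵀg(x)` for the pair `lm = (λ, μ)`. -/
def lagrangianLNL {n q p : ℕ} (f : E n → ℝ) (g : Fin p → E n → ℝ)
    (A : Matrix (Fin q) (Fin n) ℝ) (b : Fin q → ℝ) (lm : E q × E p) (x : E n) : ℝ :=
  f x + (lm.1 : Fin q → ℝ) ⬝ᵥ (A.mulVec x - b) + ∑ i, lm.2 i * g i x

open Set Metric Topology

lemma convexOn_sum {V ι : Type*} [AddCommGroup V] [Module ℝ V] (s : Finset ι) {t : Set V}
    (ht : Convex ℝ t) {f : ι → V → ℝ} (hf : ∀ i ∈ s, ConvexOn ℝ t (f i)) :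
    ConvexOn ℝ t fun x => ∑ i ∈ s, f i x := by
  simpa only [← Finset.sum_apply] using
    Finset.sum_induction f (ConvexOn ℝ t) (fun _ _ => ConvexOn.add) (convexOn_const 0 ht) hf

section StrongConvexity

variable {V : Type*} [NormedAddCommGroup V] [NormedSpace ℝ V] {h : V → ℝ} {m : ℝ}

lemma StrongConvexOn.add_convexOn {s : Set V} {k : V → ℝ} (hh : StrongConvexOn s m h)
    (hk : ConvexOn ℝ s k) : StrongConvexOn s m (h + k) := by
  have := UniformConvexOn.add hh hk.uniformConvexOn_zero
  rwa [add_zero] at this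

lemma StrongConvexOn.convexOn {s : Set V} (hh : StrongConvexOn s m h) (hm : 0 ≤ m) :
    ConvexOn ℝ s h :=
  UniformConvexOn.convexOn hh fun r => by simp only [Pi.zero_apply]; positivity

lemma StrongConvexOn.add_mul_dist_sq_le_of_forall_le (hh : StrongConvexOn univ m h) {z : V}
    (hz : ∀ y, h z ≤ h y) (x : V) : h z + m / 4 * dist x z ^ 2 ≤ h x := by
  have hmid := hh.2 (mem_univ x) (mem_univ z) (by norm_num : (0 : ℝ) ≤ 1 / 2)
    (by norm_num : (0 : ℝ) ≤ 1 / 2) (by norm_num)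
  rw [smul_eq_mul, smul_eq_mul, ← dist_eq_norm] at hmid
  linarith [hz ((1 / 2 : ℝ) • x + (1 / 2 : ℝ) • z)]

lemma ConvexOn.lt_of_forall_sphere_lt (hh : ConvexOn ℝ univ h) {x₀ x : V} {r : ℝ} (hr : 0 < r)
    (hsphere : ∀ z ∈ sphere x₀ r, h x₀ < h z) (hx : r ≤ dist x x₀) : h x₀ < h x := by
  have hd : 0 < dist x x₀ := hr.trans_le hx
  set t := r / dist x x₀
  have ht : 0 < t := div_pos hr hd
  have hz : AffineMap.lineMap x₀ x t ∈ sphere x₀ r := by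
    rw [mem_sphere, dist_lineMap_left, Real.norm_of_nonneg ht.le, dist_comm,
      div_mul_cancel₀ r hd.ne']
  have hconv := hh.2 (mem_univ x₀) (mem_univ x) (sub_nonneg.2 ((div_le_one hd).2 hx)) ht.le
    (sub_add_cancel 1 t)
  rw [← AffineMap.lineMap_apply_module, smul_eq_mul, smul_eq_mul] at hconv
  nlinarith [hsphere _ hz]

lemma StrongConvexOn.exists_forall_sphere_lt (hh : StrongConvexOn univ m h) (hm : 0 < m)
    (x₀ : V) (hbdd : BddBelow (h '' closedBall x₀ 1)) :
    ∃ r > 0, ∀ z ∈ sphere x₀ r, h x₀ < h z := by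
  obtain ⟨c, hc⟩ := hbdd
  -- this radius makes the quadratic gain `m / 2 * r * (r - 1)` beat the loss `r * (h x₀ - c)`
  refine ⟨2 + 2 * |h x₀ - c| / m, by positivity, fun z hz => ?_⟩
  set r := 2 + 2 * |h x₀ - c| / m
  have hgain : h x₀ - c < m / 2 * (r - 1) := by
    have : m / 2 * (r - 1) = m / 2 + |h x₀ - c| := by simp only [r]; field_simp; ring
    linarith [le_abs_self (h x₀ - c)]
  have hr1 : 1 ≤ r := le_add_of_le_of_nonneg one_le_two (by positivity)
  have hr : 0 < r := by positivity
  have hzr : dist z x₀ = r := mem_sphere.1 hz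
  have hw : c ≤ h (AffineMap.lineMap x₀ z r⁻¹) := by
    refine hc (mem_image_of_mem h ?_)
    rw [mem_closedBall, dist_lineMap_left, dist_comm, hzr, Real.norm_of_nonneg (by positivity),
      inv_mul_cancel₀ hr.ne']
  have hconv := hh.2 (mem_univ x₀) (mem_univ z) (sub_nonneg.2 (inv_le_one_of_one_le₀ hr1))
    (inv_nonneg.2 hr.le) (sub_add_cancel 1 r⁻¹)
  rw [← AffineMap.lineMap_apply_module, smul_eq_mul, smul_eq_mul, ← dist_eq_norm, dist_comm,
    hzr] at hconv
  have hmul := mul_le_mul_of_nonneg_left (hw.trans hconv) hr.le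
  have : r * ((1 - r⁻¹) * h x₀ + r⁻¹ * h z - (1 - r⁻¹) * r⁻¹ * (m / 2 * r ^ 2))
      = (r - 1) * h x₀ + h z - (r - 1) * (m / 2 * r) := by field_simp
  nlinarith [mul_lt_mul_of_pos_left hgain hr]

lemma StrongConvexOn.exists_forall_le [ProperSpace V] (hh : StrongConvexOn univ m h)
    (hm : 0 < m) (hc : Continuous h) : ∃ z, ∀ y, h z ≤ h y := by
  obtain ⟨r, hr, hsphere⟩ := hh.exists_forall_sphere_lt hm 0
    ((isCompact_closedBall 0 1).bddBelow_image hc.continuousOn)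
  obtain ⟨z, -, hz⟩ := (isCompact_closedBall (0 : V) r).exists_isMinOn
    (nonempty_closedBall.2 hr.le) hc.continuousOn
  refine ⟨z, fun y => ?_⟩
  by_cases hy : y ∈ closedBall 0 r
  · exact hz hy
  · exact (hz (mem_closedBall_self hr.le)).trans
      ((hh.convexOn hm.le).lt_of_forall_sphere_lt hr hsphere (not_le.1 hy).le).le

lemma ConvexOn.dist_lt_of_forall_closedBall_abs_sub_lt {k : V → ℝ} (hk : ConvexOn ℝ univ k)
    {x₀ y : V} {c ε : ℝ} (hε : 0 < ε) (hgrowth : ∀ z, h x₀ + c * dist z x₀ ^ 2 ≤ h z)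
    (hclose : ∀ z ∈ closedBall x₀ ε, |k z - h z| < c * ε ^ 2 / 2) (hy : ∀ z, k y ≤ k z) :
    dist y x₀ < ε := by
  by_contra! hfar
  refine (hy x₀).not_gt (hk.lt_of_forall_sphere_lt hε (fun z hz => ?_) hfar)
  have hz₀ := abs_lt.1 (hclose x₀ (mem_closedBall_self hε.le))
  have hz₁ := abs_lt.1 (hclose z (sphere_subset_closedBall hz))
  have hgz := hgrowth z
  rw [mem_sphere.1 hz] at hgz
  linarith [hz₀.2, hz₁.1]

theorem continuousOn_of_strongConvexOn_of_forall_le {Λ : Type*} [TopologicalSpace Λ]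
    [ProperSpace V] {L : Λ → V → ℝ} (hL : Continuous (Function.uncurry L)) {S : Set Λ}
    (hm : 0 < m) (hsc : ∀ t ∈ S, StrongConvexOn univ m (L t)) {xmin : Λ → V}
    (hmin : ∀ t ∈ S, ∀ y, L t (xmin t) ≤ L t y) : ContinuousOn xmin S := by
  intro a ha
  rw [ContinuousWithinAt, Metric.tendsto_nhds]
  intro ε hε
  have hδ : 0 < m / 4 * ε ^ 2 / 2 := by positivity
  have hnear : ∀ᶠ t in 𝓝 a, ∀ z ∈ closedBall (xmin a) ε,
      |L t z - L a z| < m / 4 * ε ^ 2 / 2 := by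
    refine (isCompact_closedBall _ _).eventually_forall_of_forall_eventually fun z _ => ?_
    have hdiff : Continuous fun p : Λ × V => |L p.1 p.2 - L a p.2| :=
      (hL.sub ((hL.uncurry_left a).comp continuous_snd)).abs
    exact hdiff.continuousAt.eventually_lt continuousAt_const (by simpa using hδ)
  filter_upwards [nhdsWithin_le_nhds hnear, self_mem_nhdsWithin] with t hclose ht
  exact ((hsc t ht).convexOn hm.le).dist_lt_of_forall_closedBall_abs_sub_lt hε
    ((hsc a ha).add_mul_dist_sq_le_of_forall_le (hmin a ha)) hclose (hmin t ht)

end StrongConvexity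

section Lagrangian

variable {n q p : ℕ}

lemma convexOn_dotProduct_mulVec_sub (c : Fin q → ℝ) (A : Matrix (Fin q) (Fin n) ℝ)
    (b : Fin q → ℝ) : ConvexOn ℝ univ fun x : E n => c ⬝ᵥ (A *ᵥ x - b) := by
  refine ⟨convex_univ, fun x _ y _ s t _ _ hst => le_of_eq ?_⟩
  simp only [WithLp.ofLp_add, WithLp.ofLp_smul, Matrix.mulVec_add, Matrix.mulVec_smul,
    dotProduct_sub, dotProduct_add, dotProduct_smul, smul_eq_mul]
  linear_combination (c ⬝ᵥ b) * hst

lemma continuous_uncurry_lagrangianLNL {f : E n → ℝ} {g : Fin p → E n → ℝ} (hfc : Continuous f)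
    (hgc : ∀ i, Continuous (g i)) (A : Matrix (Fin q) (Fin n) ℝ) (b : Fin q → ℝ) :
    Continuous (Function.uncurry (lagrangianLNL f g A b)) := by
  unfold lagrangianLNL
  fun_prop

lemma strongConvexOn_lagrangianLNL {f : E n → ℝ} {g : Fin p → E n → ℝ} {α : ℝ}
    (hfsc : StrongConvexOn univ α f) (hgconv : ∀ i, ConvexOn ℝ univ (g i))
    (A : Matrix (Fin q) (Fin n) ℝ) (b : Fin q → ℝ) {lm : E q × E p} (hμ : ∀ i, 0 ≤ lm.2 i) :
    StrongConvexOn univ α (lagrangianLNL f g A b lm) :=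
  (hfsc.add_convexOn (convexOn_dotProduct_mulVec_sub _ A b)).add_convexOn
    (convexOn_sum _ convex_univ fun i _ => (hgconv i).smul (hμ i))

end Lagrangian

theorem lagrangian_unique_minimizer_continuous
    {n q p : ℕ} (f : E n → ℝ) (hfc : Continuous f)
    (α : ℝ) (hα : 0 < α) (hfsc : StrongConvexOn Set.univ α f)
    (g : Fin p → E n → ℝ)
    (hgc : ∀ i, Continuous (g i)) (hgconv : ∀ i, ConvexOn ℝ Set.univ (g i))
    (A : Matrix (Fin q) (Fin n) ℝ) (b : Fin q → ℝ) :
    ∃ xmin : E q × E p → E n,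
      (∀ lm : E q × E p, (∀ i, 0 ≤ lm.2 i) →
        (∀ x : E n, lagrangianLNL f g A b lm (xmin lm) ≤ lagrangianLNL f g A b lm x) ∧
        (∀ x : E n, (∀ y : E n, lagrangianLNL f g A b lm x ≤ lagrangianLNL f g A b lm y) →
          x = xmin lm)) ∧
      ContinuousOn xmin {lm : E q × E p | ∀ i, 0 ≤ lm.2 i} := by
  have hL := continuous_uncurry_lagrangianLNL hfc hgc A b
  have hsc : ∀ lm ∈ {lm : E q × E p | ∀ i, 0 ≤ lm.2 i},
      StrongConvexOn univ α (lagrangianLNL f g A b lm) :=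
    fun lm hμ => strongConvexOn_lagrangianLNL hfsc hgconv A b hμ
  choose! xmin hxmin using fun lm hμ => (hsc lm hμ).exists_forall_le hα (hL.uncurry_left lm)
  refine ⟨xmin, fun lm hμ => ⟨hxmin lm hμ, fun x hx => ?_⟩,
    continuousOn_of_strongConvexOn_of_forall_le hL hα hsc hxmin⟩
  exact ((hsc lm hμ).strictConvexOn hα).eq_of_isMinOn (isMinOn_univ_iff.2 hx)
    (isMinOn_univ_iff.2 (hxmin lm hμ)) (mem_univ x) (mem_univ _)
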